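/- Let (e₁, e₂, e₃) be an orthonormal basis of ℝ³, let a ∈ ℝ, and for i = 2,…,D let X_i = b_i e₁ + c_i e₂ + d_i e₃. Set X₁ = a e₁ and let B = (b₂,…,b_D), C = (c₂,…,c_D), E = (d₂,…,d_D) ∈ ℝ^{D−1}. Then V_B(X₁,…,X_D) = a²(|C|² + |E|²) + |B|²|C|² − (B·C)² + |B|²|E|² − (B·E)² + |C|²|E|² − (C·E)². -/

import Mathlib

open RealInnerProductSpace

/-- The cross product on `ℝ³` viewed as `EuclideanSpace ℝ (Fin 3)`. -/
noncomputable def cross3 (u v : EuclideanSpace ℝ (Fin 3)) : EuclideanSpace ℝ (Fin 3) :=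
  (WithLp.equiv 2 (Fin 3 → ℝ)).symm
    (crossProduct ((WithLp.equiv 2 (Fin 3 → ℝ)) u) ((WithLp.equiv 2 (Fin 3 → ℝ)) v))

/-- The SU(2) bosonic membrane potential
`V_B(X) = (1/2) ∑_{i,j} |X_i × X_j|²`. -/
noncomputable def VB (D : ℕ) (X : Fin D → EuclideanSpace ℝ (Fin 3)) : ℝ :=
  (1 / 2) * ∑ i, ∑ j, ‖cross3 (X i) (X j)‖ ^ 2

/-!
By Lagrange's identity `|u × v|² = |u|²|v|² - (u·v)²`, `V_B = ½ ∑ᵢⱼ (Gᵢᵢ Gⱼⱼ - Gᵢⱼ²)` for the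
Gram matrix `G = M Mᵀ` of the configuration, where `M` is its `D × 3` matrix of coordinates in
an orthonormal frame. For symmetric `G` this is `½ ((tr G)² - tr G²)`, which does not change
when `M Mᵀ` is replaced by the `3 × 3` matrix `Mᵀ M`. In adapted coordinates the columns of `M`
are `(a, B)`, `(0, C)`, `(0, E)`, and `Mᵀ M` is their Gram matrix.
-/

open Matrix

lemma norm_cross3_sq (u v : EuclideanSpace ℝ (Fin 3)) :
    ‖cross3 u v‖ ^ 2 = ‖u‖ ^ 2 * ‖v‖ ^ 2 - ⟪u, v⟫ ^ 2 := by
  simp only [← real_inner_self_eq_norm_sq, EuclideanSpace.inner_eq_star_dotProduct, cross3,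
    star_trivial, WithLp.equiv_apply, WithLp.equiv_symm_apply, cross_dot_cross,
    dotProduct_comm v.ofLp u.ofLp]
  ring

lemma VB_eq_sum_gram (D : ℕ) (X : Fin D → EuclideanSpace ℝ (Fin 3)) :
    VB D X = (1 / 2) * ∑ i, ∑ j, (gram ℝ X i i * gram ℝ X j j - gram ℝ X i j ^ 2) := by
  simp only [VB, gram_apply, norm_cross3_sq, real_inner_self_eq_norm_sq]

namespace Matrix

variable {m n R : Type*} [Fintype m] [Fintype n] [CommRing R]

lemma sum_diag_mul_diag_sub_sq_of_symm {G : Matrix n n R} (hG : Gᵀ = G) :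
    ∑ i, ∑ j, (G i i * G j j - G i j ^ 2) = trace G ^ 2 - trace (G * G) := by
  have hsymm : ∀ i j, G j i = G i j := fun i j => by rw [← transpose_apply G i j, hG]
  simp only [trace, diag_apply, mul_apply, sq, Finset.sum_mul_sum, ← Finset.sum_sub_distrib,
    hsymm]

lemma sum_principal_minors_mul_transpose (M : Matrix m n R) :
    ∑ i, ∑ j, ((M * Mᵀ) i i * (M * Mᵀ) j j - (M * Mᵀ) i j ^ 2) =
      ∑ k, ∑ l, ((Mᵀ * M) k k * (Mᵀ * M) l l - (Mᵀ * M) k l ^ 2) := by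
  rw [sum_diag_mul_diag_sub_sq_of_symm (by simp), sum_diag_mul_diag_sub_sq_of_symm (by simp),
    trace_mul_comm M, Matrix.mul_assoc, trace_mul_comm M]
  simp only [Matrix.mul_assoc]

end Matrix

lemma gram_eq_mul_transpose {ι κ E : Type*} [Fintype κ] [NormedAddCommGroup E]
    [InnerProductSpace ℝ E] {e : κ → E} (he : Orthonormal ℝ e) (M : Matrix ι κ ℝ) {X : ι → E}
    (hX : ∀ i, X i = ∑ k, M i k • e k) : gram ℝ X = M * Mᵀ := by
  ext i j
  simp [hX, he.inner_sum, mul_apply]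

lemma VB_eq_of_orthonormal_coords {D : ℕ} {e : Fin 3 → EuclideanSpace ℝ (Fin 3)}
    (he : Orthonormal ℝ e) (M : Matrix (Fin D) (Fin 3) ℝ) {X : Fin D → EuclideanSpace ℝ (Fin 3)}
    (hX : ∀ i, X i = ∑ k, M i k • e k) :
    VB D X = (1 / 2) * ∑ k, ∑ l, ((Mᵀ * M) k k * (Mᵀ * M) l l - (Mᵀ * M) k l ^ 2) := by
  rw [VB_eq_sum_gram, gram_eq_mul_transpose he M hX, sum_principal_minors_mul_transpose]

def adaptedCoords {m : ℕ} (a : ℝ) (B C E : EuclideanSpace ℝ (Fin m)) :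
    Matrix (Fin (m + 1)) (Fin 3) ℝ :=
  of (Fin.cons ![a, 0, 0] fun i => ![B i, C i, E i])

lemma adaptedCoords_transpose_mul_self {m : ℕ} (a : ℝ) (B C E : EuclideanSpace ℝ (Fin m)) :
    (adaptedCoords a B C E)ᵀ * adaptedCoords a B C E =
      !![a ^ 2 + ‖B‖ ^ 2, ⟪B, C⟫, ⟪B, E⟫; ⟪B, C⟫, ‖C‖ ^ 2, ⟪C, E⟫; ⟪B, E⟫, ⟪C, E⟫, ‖E‖ ^ 2] := by
  ext k l
  fin_cases k <;> fin_cases l <;>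
    simp [adaptedCoords, mul_apply, Fin.sum_univ_succ, EuclideanSpace.real_norm_sq_eq,
      PiLp.inner_apply, ← sq, mul_comm]

theorem VB_in_adapted_coordinates_general (m : ℕ)
    (e : Fin 3 → EuclideanSpace ℝ (Fin 3)) (he : Orthonormal ℝ e)
    (a : ℝ) (B C E : EuclideanSpace ℝ (Fin m))
    (X : Fin (m + 1) → EuclideanSpace ℝ (Fin 3))
    (hX0 : X 0 = a • e 0)
    (hXs : ∀ i : Fin m, X i.succ = B i • e 0 + C i • e 1 + E i • e 2) :
    VB (m + 1) X =
      a ^ 2 * (‖C‖ ^ 2 + ‖E‖ ^ 2) + (‖B‖ ^ 2 * ‖C‖ ^ 2 - ⟪B, C⟫ ^ 2) +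
        (‖B‖ ^ 2 * ‖E‖ ^ 2 - ⟪B, E⟫ ^ 2) + (‖C‖ ^ 2 * ‖E‖ ^ 2 - ⟪C, E⟫ ^ 2) := by
  have hX : ∀ i, X i = ∑ k, adaptedCoords a B C E i k • e k := by
    refine Fin.cases ?_ fun i => ?_ <;> simp [adaptedCoords, Fin.sum_univ_three, hX0, hXs]
  rw [VB_eq_of_orthonormal_coords he _ hX, adaptedCoords_transpose_mul_self]
  simp only [Fin.sum_univ_three, of_apply, cons_val', cons_val_fin_one, cons_val_zero,
    cons_val_one, cons_val]
  ring

/-- Let `(e₁, e₂, e₃)` be an orthonormal basis of `ℝ³`.  Consider a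
configuration of `D = m + 1 ≥ 2` vectors with `X₁ = a e₁` and
`Xᵢ = bᵢ e₁ + cᵢ e₂ + dᵢ e₃` for `i = 2, …, D`, and let
`B = (b₂, …, b_D)`, `C = (c₂, …, c_D)`, `E = (d₂, …, d_D) ∈ ℝ^{D−1}`.  Then
`V_B = a²(|C|² + |E|²) + |B|²|C|² − (B·C)² + |B|²|E|² − (B·E)² + |C|²|E|² − (C·E)²`. -/
theorem VB_in_adapted_coordinates (m : ℕ) (hm : 1 ≤ m)
    (e : Fin 3 → EuclideanSpace ℝ (Fin 3)) (he : Orthonormal ℝ e)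
    (a : ℝ) (B C E : EuclideanSpace ℝ (Fin m))
    (X : Fin (m + 1) → EuclideanSpace ℝ (Fin 3))
    (hX0 : X 0 = a • e 0)
    (hXs : ∀ i : Fin m, X i.succ = B i • e 0 + C i • e 1 + E i • e 2) :
    VB (m + 1) X =
      a ^ 2 * (‖C‖ ^ 2 + ‖E‖ ^ 2) + (‖B‖ ^ 2 * ‖C‖ ^ 2 - ⟪B, C⟫ ^ 2) +
        (‖B‖ ^ 2 * ‖E‖ ^ 2 - ⟪B, E⟫ ^ 2) + (‖C‖ ^ 2 * ‖E‖ ^ 2 - ⟪C, E⟫ ^ 2) :=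
  VB_in_adapted_coordinates_general m e he a B C E X hX0 hXs
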